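/- arXiv:0805.3118 — 3 statements merged into one kernel-verified Lean document; each statement's English description precedes it below -/
import Mathlib

section
/- Let p, q be coprime positive integers. If x, x' are p-th roots of unity, y, y' are q-th roots of unity, and x − y = x' − y', then x = x' and y = y'. -/
/-!
Write `d = x - x' = y - y'`. On the unit circle conjugation is inversion, so
`conj d = -d / (x x') = -d / (y y')`; if `d ≠ 0` this forces `x x' = y y'`, a root of unity of
orders dividing both `p` and `q`, hence `x' = x⁻¹` and `y' = y⁻¹`. Then `x - y = x⁻¹ - y⁻¹`
gives `x = y` or `x y = -1`, and in both cases `x²` is a `q`-th root of unity as well as a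
`p`-th one, so `x² = 1` and `x' = x⁻¹ = x`, contradicting `d ≠ 0`.
-/

lemma mul_eq_mul_of_inv_sub_inv_eq {K : Type*} [Field K] {x x' y y' : K}
    (hx : x ≠ 0) (hx' : x' ≠ 0) (hy : y ≠ 0) (hy' : y' ≠ 0) (hne : x ≠ x')
    (h : x - x' = y - y') (hinv : x⁻¹ - x'⁻¹ = y⁻¹ - y'⁻¹) : x * x' = y * y' := by
  have hcross : (x' - x) * (y * y') = (y' - y) * (x * x') := by
    field_simp at hinv
    linear_combination hinv
  have hsub : (x - x') * (y * y') = (x - x') * (x * x') := by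
    linear_combination -hcross - (x * x') * h
  exact (mul_left_cancel₀ (sub_ne_zero.mpr hne) hsub).symm

lemma Complex.mul_eq_mul_of_sub_eq_sub_of_norm_eq_one {x x' y y' : ℂ}
    (hx : ‖x‖ = 1) (hx' : ‖x'‖ = 1) (hy : ‖y‖ = 1) (hy' : ‖y'‖ = 1) (hne : x ≠ x')
    (h : x - x' = y - y') : x * x' = y * y' := by
  have hinv : x⁻¹ - x'⁻¹ = y⁻¹ - y'⁻¹ := by
    simpa only [map_sub, Complex.inv_eq_conj, hx, hx', hy, hy'] using
      congrArg (starRingEnd ℂ) h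
  have ne_zero {z : ℂ} (hz : ‖z‖ = 1) : z ≠ 0 := ne_zero_of_norm_ne_zero (hz ▸ one_ne_zero)
  exact mul_eq_mul_of_inv_sub_inv_eq (ne_zero hx) (ne_zero hx') (ne_zero hy) (ne_zero hy')
    hne h hinv

lemma eq_or_mul_eq_neg_one_of_sub_eq_inv_sub_inv {K : Type*} [Field K] {x y : K}
    (hx : x ≠ 0) (hy : y ≠ 0) (h : x - y = x⁻¹ - y⁻¹) : x = y ∨ x * y = -1 := by
  have hprod : (x - y) * (x * y + 1) = 0 := by
    field_simp at h
    linear_combination h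
  rcases mul_eq_zero.mp hprod with hxy | hxy
  · exact .inl (sub_eq_zero.mp hxy)
  · exact .inr (eq_neg_of_add_eq_zero_left hxy)

theorem psk_difference_unique (p q : ℕ) (hp : 0 < p) (hq : 0 < q)
    (hpq : Nat.Coprime p q) (x x' y y' : ℂ)
    (hx : x ^ p = 1) (hx' : x' ^ p = 1) (hy : y ^ q = 1) (hy' : y' ^ q = 1)
    (h : x - y = x' - y') : x = x' ∧ y = y' := by
  suffices hxx : x = x' from ⟨hxx, by rw [hxx] at h; exact sub_right_injective h⟩
  by_contra hne
  have norm_one {z : ℂ} {n : ℕ} (hz : z ^ n = 1) (hn : 0 < n) : ‖z‖ = 1 :=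
    Complex.norm_eq_one_of_pow_eq_one hz hn.ne'
  have hmul : x * x' = y * y' := Complex.mul_eq_mul_of_sub_eq_sub_of_norm_eq_one
    (norm_one hx hp) (norm_one hx' hp) (norm_one hy hq) (norm_one hy' hq) hne
    (by linear_combination h)
  have hxx' : x * x' = 1 := (pow_eq_one_iff_of_coprime hpq).mp
    ⟨by rw [mul_pow, hx, hx', one_mul], by rw [hmul, mul_pow, hy, hy', one_mul]⟩
  have hyy' : y * y' = 1 := hmul ▸ hxx'
  rw [eq_inv_of_mul_eq_one_right hxx'] at h hne
  rw [eq_inv_of_mul_eq_one_right hyy'] at h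
  have hx0 : x ≠ 0 := left_ne_zero_of_mul_eq_one hxx'
  have hy0 : y ≠ 0 := left_ne_zero_of_mul_eq_one hyy'
  have hsq_q : (x ^ 2) ^ q = 1 := by
    rcases eq_or_mul_eq_neg_one_of_sub_eq_inv_sub_inv hx0 hy0 h with rfl | hxy
    · rw [← pow_mul, mul_comm, pow_mul, hy, one_pow]
    · have : ((x * y) ^ 2) ^ q = 1 := by rw [hxy, neg_one_sq, one_pow]
      rwa [mul_pow, mul_pow, ← pow_mul y, mul_comm 2 q, pow_mul, hy, one_pow, mul_one] at this
  have hsq : x ^ 2 = 1 := (pow_eq_one_iff_of_coprime hpq).mp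
    ⟨by rw [← pow_mul, mul_comm, pow_mul, hx, one_pow], hsq_q⟩
  exact hne (inv_eq_of_mul_eq_one_right (by rw [← sq, hsq])).symm
end

section
/- Let p, q be coprime positive integers, X the p-th roots of unity, Y the q-th roots of unity. If x, x̃ ∈ X^K, y, ỹ ∈ Y^K, and h, h̃ are complex L-vectors with h ≠ 0, such that x∗h = x̃∗h̃ ≠ 0 and y∗h = ỹ∗h̃, then x = x̃, y = ỹ and h = h̃. -/
/-!
Read a length-`K` sequence as the polynomial of degree `< K` with these coefficients; the
Toeplitz matrix-vector products are then polynomial products, so cross-multiplying the two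
equations and cancelling the nonzero `h·h̃` gives `x·ỹ = x̃·y`. Compare coefficients inductively:
at step `n` every term except the extreme ones cancels, leaving `y₀(xₙ - x̃ₙ) = x₀(yₙ - ỹₙ)`.
Multiplying this by its complex conjugate (which inverts roots of unity) yields
`u + u⁻¹ = v + v⁻¹` for the `p`-th root `u = xₙ/x̃ₙ` and the `q`-th root `v = yₙ/ỹₙ`, so
`u = v^{±1}` is both a `p`-th and a `q`-th root of unity, i.e. `u = 1`.
Finally `h = h̃` by cancelling `x`.
-/

noncomputable def toeplitzEntry {K : ℕ} (s : Fin K → ℂ) (i j : ℕ) : ℂ :=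
  if h : j ≤ i ∧ i - j < K then s ⟨i - j, h.2⟩ else 0

noncomputable def toeplitz (K L : ℕ) (s : Fin K → ℂ) :
    Matrix (Fin (K + L - 1)) (Fin L) ℂ :=
  fun i j => toeplitzEntry s i.val j.val

open Polynomial ComplexConjugate

section RootsOfUnity

variable {p q : ℕ}

lemma eq_one_of_pow_eq_one_of_coprime {M : Type*} [Monoid M] {z : M} (hpq : p.Coprime q)
    (hp : z ^ p = 1) (hq : z ^ q = 1) : z = 1 := by
  simpa [hpq.gcd_eq_one] using pow_gcd_eq_one.mpr ⟨hp, hq⟩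

lemma div_pow_eq_one {G : Type*} [DivisionCommMonoid G] {a b : G} (ha : a ^ p = 1)
    (hb : b ^ p = 1) : (a / b) ^ p = 1 := by
  rw [div_pow, ha, hb, div_one]

lemma eq_one_of_add_inv_eq_add_inv {F : Type*} [Field F] (hp : p ≠ 0) (hq : q ≠ 0)
    (hpq : p.Coprime q) {u v : F} (hu : u ^ p = 1) (hv : v ^ q = 1)
    (huv : u + u⁻¹ = v + v⁻¹) : u = 1 := by
  have hu0 : u ≠ 0 := (IsUnit.of_pow_eq_one hu hp).ne_zero
  have hv0 : v ≠ 0 := (IsUnit.of_pow_eq_one hv hq).ne_zero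
  have hfactor : (u - v) * (u * v - 1) = 0 := by
    field_simp at huv
    linear_combination huv
  refine eq_one_of_pow_eq_one_of_coprime hpq hu ?_
  rcases mul_eq_zero.mp hfactor with h | h
  · rwa [sub_eq_zero.mp h]
  · rwa [eq_inv_of_mul_eq_one_left (sub_eq_zero.mp h), inv_pow, inv_eq_one]

lemma eq_and_eq_of_mul_eq_mul_of_coprime {G : Type*} [CommGroupWithZero G] (hp : p ≠ 0)
    (hq : q ≠ 0) (hpq : p.Coprime q) {c d e f : G} (hc : c ^ p = 1) (hd : d ^ p = 1)
    (he : e ^ q = 1) (hf : f ^ q = 1) (h : c * f = d * e) : c = d ∧ e = f := by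
  have hd0 : d ≠ 0 := (IsUnit.of_pow_eq_one hd hp).ne_zero
  have hf0 : f ≠ 0 := (IsUnit.of_pow_eq_one hf hq).ne_zero
  have hratio : c / d = e / f := by rw [div_eq_div_iff hd0 hf0, h, mul_comm]
  have h1 : c / d = 1 :=
    eq_one_of_pow_eq_one_of_coprime hpq (div_pow_eq_one hc hd) (hratio ▸ div_pow_eq_one he hf)
  exact ⟨(div_eq_one_iff_eq hd0).mp h1, (div_eq_one_iff_eq hf0).mp (hratio ▸ h1)⟩

lemma Complex.eq_and_eq_of_mul_sub_eq_mul_sub_of_coprime (hp : p ≠ 0) (hq : q ≠ 0)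
    (hpq : p.Coprime q) {a c d b e f : ℂ} (ha : a ^ p = 1) (hc : c ^ p = 1) (hd : d ^ p = 1)
    (hb : b ^ q = 1) (he : e ^ q = 1) (hf : f ^ q = 1) (h : b * (c - d) = a * (e - f)) :
    c = d ∧ e = f := by
  have hinv_conj {n : ℕ} (hn : n ≠ 0) {z : ℂ} (hz : z ^ n = 1) : z⁻¹ = conj z :=
    Complex.inv_eq_conj (Complex.norm_eq_one_of_pow_eq_one hz hn)
  have hconj : b⁻¹ * (c⁻¹ - d⁻¹) = a⁻¹ * (e⁻¹ - f⁻¹) := by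
    simpa only [hinv_conj hp ha, hinv_conj hp hc, hinv_conj hp hd, hinv_conj hq hb,
      hinv_conj hq he, hinv_conj hq hf, map_mul, map_sub] using congrArg conj h
  have ha0 : a ≠ 0 := (IsUnit.of_pow_eq_one ha hp).ne_zero
  have hd0 : d ≠ 0 := (IsUnit.of_pow_eq_one hd hp).ne_zero
  have hsum : c / d + (c / d)⁻¹ = e / f + (e / f)⁻¹ := by
    have hb0 : b ≠ 0 := (IsUnit.of_pow_eq_one hb hq).ne_zero
    have hc0 : c ≠ 0 := (IsUnit.of_pow_eq_one hc hp).ne_zero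
    have he0 : e ≠ 0 := (IsUnit.of_pow_eq_one he hq).ne_zero
    have hf0 : f ≠ 0 := (IsUnit.of_pow_eq_one hf hq).ne_zero
    have hprod := congrArg₂ (· * ·) h hconj
    field_simp at hprod ⊢
    linear_combination -hprod
  have hcd : c = d := (div_eq_one_iff_eq hd0).mp <|
    eq_one_of_add_inv_eq_add_inv hp hq hpq (div_pow_eq_one hc hd) (div_pow_eq_one he hf) hsum
  refine ⟨hcd, ?_⟩
  rw [hcd, sub_self, mul_zero, eq_comm, mul_eq_zero, sub_eq_zero] at h
  exact h.resolve_left ha0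

end RootsOfUnity

lemma Polynomial.coeff_mul_sub_eq_of_mul_eq_mul {R : Type*} [CommRing R] {A A' B B' : R[X]}
    (hAB : A * B' = A' * B) {n : ℕ} (hn : 0 < n) (hA : ∀ i < n, A.coeff i = A'.coeff i)
    (hB : ∀ i < n, B.coeff i = B'.coeff i) :
    B.coeff 0 * (A.coeff n - A'.coeff n) = A.coeff 0 * (B.coeff n - B'.coeff n) := by
  obtain ⟨m, rfl⟩ : ∃ m, n = m + 1 := Nat.exists_eq_succ_of_ne_zero hn.ne'
  have hcoeff := congrArg (coeff · (m + 1)) hAB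
  simp only [coeff_mul, Finset.Nat.sum_antidiagonal_eq_sum_range_succ_mk,
    Finset.sum_range_succ _ (m + 1), Finset.sum_range_succ' _ m] at hcoeff
  have hmiddle : ∑ k ∈ Finset.range m, A.coeff (k + 1) * B'.coeff (m + 1 - (k + 1)) =
      ∑ k ∈ Finset.range m, A'.coeff (k + 1) * B.coeff (m + 1 - (k + 1)) := by
    refine Finset.sum_congr rfl fun k hk => ?_
    rw [Finset.mem_range] at hk
    rw [hA _ (by omega), hB _ (by omega)]
  simp only [Nat.sub_self, Nat.sub_zero] at hcoeff hmiddle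
  rw [← hA 0 hn, ← hB 0 hn] at hcoeff
  linear_combination hcoeff - hmiddle

lemma Complex.coeff_eq_of_mul_eq_mul_of_coprime {p q : ℕ} (hp : p ≠ 0) (hq : q ≠ 0)
    (hpq : p.Coprime q) {K : ℕ} {A A' B B' : ℂ[X]} (hA : ∀ i < K, A.coeff i ^ p = 1)
    (hA' : ∀ i < K, A'.coeff i ^ p = 1) (hB : ∀ i < K, B.coeff i ^ q = 1)
    (hB' : ∀ i < K, B'.coeff i ^ q = 1) (hAB : A * B' = A' * B) :
    ∀ n < K, A.coeff n = A'.coeff n ∧ B.coeff n = B'.coeff n := by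
  intro n
  induction n using Nat.strong_induction_on with
  | _ n ih =>
    intro hn
    rcases Nat.eq_zero_or_pos n with rfl | hn0
    · refine eq_and_eq_of_mul_eq_mul_of_coprime hp hq hpq (hA 0 hn) (hA' 0 hn) (hB 0 hn)
        (hB' 0 hn) ?_
      simpa only [mul_coeff_zero, mul_comm (B.coeff 0)] using congrArg (coeff · 0) hAB
    · have hlt : ∀ i < n, A.coeff i = A'.coeff i ∧ B.coeff i = B'.coeff i :=
        fun i hi => ih i hi (hi.trans hn)
      exact Complex.eq_and_eq_of_mul_sub_eq_mul_sub_of_coprime hp hq hpq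
        (hA 0 (hn0.trans hn)) (hA n hn) (hA' n hn) (hB 0 (hn0.trans hn)) (hB n hn) (hB' n hn)
        (coeff_mul_sub_eq_of_mul_eq_mul hAB hn0 (fun i hi => (hlt i hi).1)
          (fun i hi => (hlt i hi).2))

lemma toeplitzEntry_eq_coeff_ofFn {K : ℕ} (s : Fin K → ℂ) (i j : ℕ) :
    toeplitzEntry s i j = if j ≤ i then (ofFn K s).coeff (i - j) else 0 := by
  unfold toeplitzEntry
  by_cases hji : j ≤ i <;> by_cases hK : i - j < K <;>
    simp [hji, hK, ofFn_coeff_eq_zero_of_ge, not_lt.mp]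

lemma coeff_ofFn_mul_ofFn {K L : ℕ} (s : Fin K → ℂ) (t : Fin L → ℂ) (n : ℕ) :
    (ofFn K s * ofFn L t).coeff n = ∑ j : Fin L, toeplitzEntry s n j * t j := by
  simp only [ofFn_eq_sum_monomial (v := t), Finset.mul_sum, finsetSum_coeff,
    ← C_mul_X_pow_eq_monomial, mul_left_comm _ (C _), coeff_C_mul, coeff_mul_X_pow',
    toeplitzEntry_eq_coeff_ofFn]
  exact Finset.sum_congr rfl fun _ _ => mul_comm _ _

lemma coeff_ofFn_mul_ofFn_eq_zero {K L n : ℕ} (s : Fin K → ℂ) (t : Fin L → ℂ)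
    (hn : K + L - 1 ≤ n) : (ofFn K s * ofFn L t).coeff n = 0 := by
  rw [coeff_ofFn_mul_ofFn]
  refine Finset.sum_eq_zero fun j _ => ?_
  have hj := j.isLt
  rw [toeplitzEntry, dif_neg (by omega), zero_mul]

lemma toeplitz_mulVec_apply {K L : ℕ} (s : Fin K → ℂ) (t : Fin L → ℂ)
    (i : Fin (K + L - 1)) : (toeplitz K L s).mulVec t i = (ofFn K s * ofFn L t).coeff i := by
  rw [coeff_ofFn_mul_ofFn]
  rfl

lemma toeplitz_mulVec_eq_iff {K L : ℕ} {s s' : Fin K → ℂ} {t t' : Fin L → ℂ} :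
    (toeplitz K L s).mulVec t = (toeplitz K L s').mulVec t' ↔
      ofFn K s * ofFn L t = ofFn K s' * ofFn L t' := by
  refine ⟨fun h => ext fun n => ?_, fun h => funext fun i => by
    rw [toeplitz_mulVec_apply, toeplitz_mulVec_apply, h]⟩
  by_cases hn : n < K + L - 1
  · simpa only [toeplitz_mulVec_apply] using congrFun h ⟨n, hn⟩
  · rw [coeff_ofFn_mul_ofFn_eq_zero _ _ (not_lt.mp hn),
      coeff_ofFn_mul_ofFn_eq_zero _ _ (not_lt.mp hn)]

lemma Complex.eq_and_eq_of_ofFn_mul_eq_mul_of_coprime {p q : ℕ} (hp : p ≠ 0) (hq : q ≠ 0)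
    (hpq : p.Coprime q) {K : ℕ} {x x' y y' : Fin K → ℂ} (hx : ∀ i, x i ^ p = 1)
    (hx' : ∀ i, x' i ^ p = 1) (hy : ∀ i, y i ^ q = 1) (hy' : ∀ i, y' i ^ q = 1)
    (hxy : ofFn K x * ofFn K y' = ofFn K x' * ofFn K y) : x = x' ∧ y = y' := by
  have hcoeff := Complex.coeff_eq_of_mul_eq_mul_of_coprime hp hq hpq (K := K)
    (fun i hi => by simpa [hi] using hx ⟨i, hi⟩) (fun i hi => by simpa [hi] using hx' ⟨i, hi⟩)
    (fun i hi => by simpa [hi] using hy ⟨i, hi⟩) (fun i hi => by simpa [hi] using hy' ⟨i, hi⟩)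
    hxy
  exact ⟨funext fun i => by simpa using (hcoeff i i.isLt).1,
    funext fun i => by simpa using (hcoeff i i.isLt).2⟩

theorem blind_unique_identification_general (p q K L : ℕ) (hp : 0 < p) (hq : 0 < q)
    (hpq : Nat.Coprime p q) (hK : 0 < K)
    (x xt y yt : Fin K → ℂ) (h ht : Fin L → ℂ)
    (hx : ∀ i, x i ^ p = 1) (hxt : ∀ i, xt i ^ p = 1)
    (hy : ∀ i, y i ^ q = 1) (hyt : ∀ i, yt i ^ q = 1)
    (hh : h ≠ 0)
    (hu : (toeplitz K L x).mulVec h = (toeplitz K L xt).mulVec ht)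
    (hv : (toeplitz K L y).mulVec h = (toeplitz K L yt).mulVec ht) :
    x = xt ∧ y = yt ∧ h = ht := by
  rw [toeplitz_mulVec_eq_iff] at hu hv
  have hx0 : ofFn K x ≠ 0 := fun h0 => (IsUnit.of_pow_eq_one (hx ⟨0, hK⟩) hp.ne').ne_zero <| by
    rw [← ofFn_coeff_eq_val_of_lt x hK, h0, coeff_zero]
  have hh0 : ofFn L h ≠ 0 := by rwa [Ne, ← map_zero (ofFn L), (injective_ofFn L).eq_iff]
  have hht0 : ofFn L ht ≠ 0 := right_ne_zero_of_mul (hu ▸ mul_ne_zero hx0 hh0)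
  have hxy : ofFn K x * ofFn K yt = ofFn K xt * ofFn K y :=
    mul_right_cancel₀ (mul_ne_zero hh0 hht0) <| by
      linear_combination ofFn K yt * ofFn L ht * hu - ofFn K xt * ofFn L ht * hv
  obtain ⟨rfl, rfl⟩ :=
    Complex.eq_and_eq_of_ofFn_mul_eq_mul_of_coprime hp.ne' hq.ne' hpq hx hxt hy hyt hxy
  exact ⟨rfl, rfl, injective_ofFn L (mul_left_cancel₀ hx0 hu)⟩

/-- Unique identifiability (noise-free) of the two-block coprime-PSK blind
channel estimation scheme. -/
theorem blind_unique_identification (p q K L : ℕ) (hp : 0 < p) (hq : 0 < q)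
    (hpq : Nat.Coprime p q) (hK : 0 < K) (hL : 0 < L)
    (x xt y yt : Fin K → ℂ) (h ht : Fin L → ℂ)
    (hx : ∀ i, x i ^ p = 1) (hxt : ∀ i, xt i ^ p = 1)
    (hy : ∀ i, y i ^ q = 1) (hyt : ∀ i, yt i ^ q = 1)
    (hh : h ≠ 0)
    (hu : (toeplitz K L x).mulVec h = (toeplitz K L xt).mulVec ht)
    (hu0 : (toeplitz K L x).mulVec h ≠ 0)
    (hv : (toeplitz K L y).mulVec h = (toeplitz K L yt).mulVec ht) :
    x = xt ∧ y = yt ∧ h = ht :=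
  blind_unique_identification_general p q K L hp hq hpq hK x xt y yt h ht hx hxt hy hyt hh hu hv
end

section
/- If z, z̃ ∈ ℂ^K differ first at index k (z_k ≠ z̃_k, z_ℓ = z̃_ℓ for ℓ < k), then the K×K matrix T(z̃)[k:K+k−1] − T(z)[k:K+k−1] is lower triangular with all diagonal entries equal to z̃_k − z_k, hence invertible. -/
/-- Rows `k+1` through `K+k` (0-indexed rows `k,…,K+k−1`) of the banded
Toeplitz matrix of `s`. -/
noncomputable def toeplitzRows (K : ℕ) (s : Fin K → ℂ) (k : ℕ) :
    Matrix (Fin K) (Fin K) ℂ :=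
  fun i j => toeplitzEntry s (k + i.val) j.val

theorem toeplitzEntry_add_self {K : ℕ} (s : Fin K → ℂ) (n : Fin K) (j : ℕ) :
    toeplitzEntry s (n + j) j = s n := by
  have h : j ≤ n + j ∧ n + j - j < K := ⟨by omega, by simp⟩
  rw [toeplitzEntry, dif_pos h]
  simp only [Nat.add_sub_cancel]

theorem toeplitzEntry_eq_of_lt {K : ℕ} {z zt : Fin K → ℂ} {k : Fin K}
    (hprev : ∀ l : Fin K, l < k → z l = zt l) {i j : ℕ} (hij : i < k + j) :
    toeplitzEntry z i j = toeplitzEntry zt i j := by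
  unfold toeplitzEntry
  split_ifs with h
  · exact hprev _ (Fin.mk_lt_mk.mpr (by omega))
  · rfl

theorem Matrix.isUnit_det_of_lowerTriangular_of_diag_eq {n R : Type*} [Fintype n]
    [LinearOrder n] [CommRing R] {M : Matrix n n R} {c : R}
    (hM : M.IsLowerTriangular) (hdiag : ∀ i, M i i = c) (hc : IsUnit c) :
    IsUnit M.det := by
  rw [Matrix.det_of_isLowerTriangular M hM, Finset.prod_congr rfl fun i _ => hdiag i,
    Finset.prod_const]
  exact hc.pow _

theorem toeplitz_difference_block (K : ℕ) (z zt : Fin K → ℂ) (k : Fin K)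
    (hzk : z k ≠ zt k) (hprev : ∀ l : Fin K, l < k → z l = zt l) :
    (∀ i j : Fin K, i < j →
        (toeplitzRows K zt k.val - toeplitzRows K z k.val) i j = 0) ∧
      (∀ i : Fin K,
        (toeplitzRows K zt k.val - toeplitzRows K z k.val) i i = zt k - z k) ∧
      IsUnit (toeplitzRows K zt k.val - toeplitzRows K z k.val).det := by
  have hupper : ∀ i j : Fin K, i < j →
      (toeplitzRows K zt k.val - toeplitzRows K z k.val) i j = 0 := fun i j hij =>
    sub_eq_zero.mpr (toeplitzEntry_eq_of_lt hprev (by omega)).symm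
  have hdiag : ∀ i : Fin K,
      (toeplitzRows K zt k.val - toeplitzRows K z k.val) i i = zt k - z k := fun i => by
    simp only [Matrix.sub_apply, toeplitzRows, toeplitzEntry_add_self]
  exact ⟨hupper, hdiag, Matrix.isUnit_det_of_lowerTriangular_of_diag_eq hupper hdiag
    (sub_ne_zero.mpr hzk.symm).isUnit⟩
end
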